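/- arXiv:1502.02627 — 7 statements merged into one kernel-verified Lean document; each statement's English description precedes it below -/
import Mathlib

section
/- Let 1 → N → G → A → 1 be a short exact sequence of groups where N is a characteristic subgroup of G. If every automorphism of A has infinitely many twisted conjugacy classes, then every automorphism of G has infinitely many twisted conjugacy classes. -/
/-- If `1 → N → G → A → 1` is short exact with `N = ker π` characteristic in `G`,
and every automorphism of `A` has infinitely many twisted conjugacy classes, then so does
every automorphism of `G`. -/
theorem Rinf_of_quotient (G A : Type*) [Group G] [Group A] (π : G →* A)
    (hsurj : Function.Surjective π)
    (hchar : ∀ σ : G ≃* G, ∀ x : G, π x = 1 → π (σ x) = 1)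
    (hA : ∀ ψ : A ≃* A, Infinite (Quot (fun x y : A => ∃ z : A, x = z * y * ψ z⁻¹)))
    (φ : G ≃* G) :
    Infinite (Quot (fun x y : G => ∃ z : G, x = z * y * φ z⁻¹)) := by
  classical
  set f_inv := Function.surjInv hsurj with hf_inv
  have hf : Function.RightInverse f_inv π := Function.rightInverse_surjInv hsurj
  -- the induced homomorphism on A from φ
  let ψ₁ : A →* A := π.liftOfRightInverse f_inv hf ⟨π.comp φ.toMonoidHom, hchar φ⟩
  let ψ₂ : A →* A := π.liftOfRightInverse f_inv hf ⟨π.comp φ.symm.toMonoidHom, hchar φ.symm⟩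
  have h₁ : ∀ g : G, ψ₁ (π g) = π (φ g) := fun g =>
    π.liftOfRightInverse_comp_apply f_inv hf _ g
  have h₂ : ∀ g : G, ψ₂ (π g) = π (φ.symm g) := fun g =>
    π.liftOfRightInverse_comp_apply f_inv hf _ g
  have h21 : ∀ a : A, ψ₂ (ψ₁ a) = a := by
    intro a
    obtain ⟨g, rfl⟩ := hsurj a
    rw [h₁, h₂, MulEquiv.symm_apply_apply]
  have h12 : ∀ a : A, ψ₁ (ψ₂ a) = a := by
    intro a
    obtain ⟨g, rfl⟩ := hsurj a
    rw [h₂, h₁, MulEquiv.apply_symm_apply]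
  let ψ : A ≃* A :=
    { toFun := ψ₁, invFun := ψ₂, left_inv := h21, right_inv := h12,
      map_mul' := map_mul ψ₁ }
  have := hA ψ
  -- the induced map on twisted conjugacy classes
  let F : Quot (fun x y : G => ∃ z : G, x = z * y * φ z⁻¹) →
      Quot (fun x y : A => ∃ z : A, x = z * y * ψ z⁻¹) :=
    Quot.map π (by
      rintro x y ⟨z, rfl⟩
      exact ⟨π z, by simp only [map_mul]; rw [show ψ ((π z)⁻¹) = ψ₁ (π z⁻¹) by
        simp [ψ], h₁]⟩)
  have hFsurj : Function.Surjective F := by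
    rintro ⟨a⟩
    obtain ⟨g, rfl⟩ := hsurj a
    exact ⟨Quot.mk _ g, rfl⟩
  exact Infinite.of_surjective F hFsurj
end

section
/- If the twisted conjugacy class [e]_φ of the identity element of a group G under an automorphism φ is a subgroup of G, then it is a normal subgroup of G. -/
/-- If the twisted conjugacy class `[e]_φ` of the identity is a subgroup of `G`,
then it is a normal subgroup of `G`. -/
theorem class_of_one_normal (G : Type*) [Group G] (φ : G ≃* G) (H : Subgroup G)
    (hH : (H : Set G) = {w : G | ∃ z : G, w = z * φ z⁻¹}) : H.Normal := by
  have h1 : ∀ z : G, z * φ z⁻¹ ∈ H := fun z => by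
    rw [← SetLike.mem_coe, hH]; exact ⟨z, rfl⟩
  constructor
  intro n hn g
  obtain ⟨z, hz⟩ : ∃ z : G, n = z * φ z⁻¹ := by
    rw [← SetLike.mem_coe, hH] at hn; exact hn
  have key : g * n * g⁻¹ = ((g * z) * φ (g * z)⁻¹) * (g * φ g⁻¹)⁻¹ := by
    subst hz
    simp only [map_mul, map_inv, mul_inv_rev]
    group
  rw [key]
  exact H.mul_mem (h1 _) (H.inv_mem (h1 _))
end

section
/- Let G be a group such that for every automorphism φ of G the class [e]_φ is a subgroup, and let N be a normal subgroup of G invariant under an automorphism φ. Then the class [ē]_φ̄ of the identity of G/N under the induced automorphism φ̄ is a subgroup of G/N. -/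
/-- If for every automorphism `σ` of `G` the class `[e]_σ` is a subgroup, `N` is a normal
`φ`-invariant subgroup, and `ψ` is the automorphism induced by `φ` on `G/N`, then the class
`[ē]_ψ` is a subgroup of `G/N`. -/
theorem class_of_one_subgroup_quotient (G : Type*) [Group G]
    (hG : ∀ σ : G ≃* G, ∃ H : Subgroup G, (H : Set G) = {w : G | ∃ z : G, w = z * σ z⁻¹})
    (N : Subgroup G) [N.Normal] (φ : G ≃* G)
    (hN : N.map φ.toMonoidHom = N)
    (ψ : (G ⧸ N) ≃* (G ⧸ N))
    (hψ : ∀ g : G, ψ (g : G ⧸ N) = ((φ g : G) : G ⧸ N)) :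
    ∃ H : Subgroup (G ⧸ N),
      (H : Set (G ⧸ N)) = {w : G ⧸ N | ∃ z : G ⧸ N, w = z * ψ z⁻¹} := by
  obtain ⟨H, hH⟩ := hG φ
  refine ⟨H.map (QuotientGroup.mk' N), ?_⟩
  ext w
  simp only [Subgroup.coe_map, Set.mem_image, SetLike.mem_coe, Set.mem_setOf_eq]
  constructor
  · rintro ⟨x, hx, rfl⟩
    have : x ∈ {w : G | ∃ z : G, w = z * φ z⁻¹} := hH ▸ hx
    obtain ⟨z, rfl⟩ := this
    refine ⟨(z : G ⧸ N), ?_⟩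
    have := hψ z⁻¹
    simp only [QuotientGroup.mk'_apply, QuotientGroup.mk_mul]
    rw [← QuotientGroup.mk_inv, this, map_inv]
  · rintro ⟨z, rfl⟩
    obtain ⟨g, rfl⟩ := QuotientGroup.mk_surjective z
    refine ⟨g * φ g⁻¹, ?_, ?_⟩
    · rw [← SetLike.mem_coe, hH]; exact ⟨g, rfl⟩
    · simp only [QuotientGroup.mk'_apply, QuotientGroup.mk_mul]
      rw [← QuotientGroup.mk_inv, hψ g⁻¹, map_inv]
end

section
/- Let F be a field of characteristic zero, and x₁,…,x_k ∈ F algebraically independent over ℚ. Let x_{k+1} ∈ F be such that x₁,…,x_{k+1} are algebraically dependent over ℚ. Suppose δ is a field automorphism of F with δ(x_i) = t₀ t_i x_i for i = 1,…,k+1, where t₀,…,t_{k+1} are rational numbers such that t_i ≠ 1 for i ≥ 1 and the sets of primes ν(t_i) occurring in the numerator or denominator of t_i are pairwise disjoint and ν(t_i) ≠ ∅ for i ≥ 1. Then x_{k+1} = 0. -/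
/-- `ν x` is the set of primes dividing the numerator or the denominator of `x : ℚ`. -/
def nuPrimes (x : ℚ) : Set ℕ := {p : ℕ | p.Prime ∧ ((p : ℤ) ∣ x.num ∨ p ∣ x.den)}

/-!
If every `xᵢ` were nonzero, the monomials `x^a` would be eigenvectors of `δ`, viewed as a
`ℚ`-linear map, with eigenvalues `λ(a) = ∏ (t₀ tᵢ)^{aᵢ}`. A prime `p ∈ ν(tᵢ)` divides neither `t₀`
nor any other `tⱼ`, so `v_p(λ(a)) = aᵢ v_p(tᵢ)` with `v_p(tᵢ) ≠ 0`; hence `a ↦ λ(a)` is injective.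
Eigenvectors with distinct eigenvalues are linearly independent, so the monomials in `x` would be
linearly independent, i.e. `x` algebraically independent. Since `x₁, …, x_k` are nonzero, this
forces `x_{k+1} = 0`.
-/

open MvPolynomial Function

section

variable {ι : Type*}

theorem padicValRat_eq_zero_iff_notMem_nuPrimes {q : ℚ} (hq : q ≠ 0) {p : ℕ} (hp : p.Prime) :
    padicValRat p q = 0 ↔ p ∉ nuPrimes q := by
  have hnum : padicValInt p q.num = 0 ↔ ¬ (p : ℤ) ∣ q.num := by
    simp [padicValInt.eq_zero_iff, hp.ne_one, Rat.num_ne_zero.2 hq]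
  have hden : padicValNat p q.den = 0 ↔ ¬ p ∣ q.den := by
    simp [padicValNat.eq_zero_iff, hp.ne_one, q.den_ne_zero]
  have hcop : padicValInt p q.num = 0 ∨ padicValNat p q.den = 0 := by
    rw [hnum, hden, ← not_and_or]
    exact fun ⟨h₁, h₂⟩ => hp.ne_one (Nat.eq_one_of_dvd_coprimes q.reduced (Int.natCast_dvd.1 h₁) h₂)
  simp only [nuPrimes, Set.mem_ofPred_eq, hp, true_and, not_or, padicValRat_def, ← hnum, ← hden]
  omega

theorem padicValRat_finset_prod {p : ℕ} [Fact p.Prime] {S : Finset ι} {f : ι → ℚ}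
    (hf : ∀ i ∈ S, f i ≠ 0) : padicValRat p (∏ i ∈ S, f i) = ∑ i ∈ S, padicValRat p (f i) := by
  classical
  induction S using Finset.induction_on with
  | empty => simp
  | insert a S ha ih =>
    rw [Finset.prod_insert ha, Finset.sum_insert ha,
      padicValRat.mul (hf a (by simp)) (Finset.prod_ne_zero_iff.2 fun i hi => hf i (by simp [hi])),
      ih fun i hi => hf i (by simp [hi])]

theorem padicValRat_finsuppProd_pow_of_separating {s : ι → ℚ} (hs : ∀ i, s i ≠ 0)
    {p : ℕ} [Fact p.Prime] {i : ι} (hsep : ∀ j ≠ i, padicValRat p (s j) = 0) (a : ι →₀ ℕ) :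
    padicValRat p (a.prod fun j n => s j ^ n) = a i * padicValRat p (s i) := by
  rw [Finsupp.prod, padicValRat_finset_prod fun j _ => pow_ne_zero _ (hs j)]
  refine (Finset.sum_eq_single i (fun j _ hji => ?_) fun hi => ?_).trans ?_
  · rw [padicValRat.pow, hsep j hji, mul_zero]
  · simp [Finsupp.notMem_support_iff.1 hi]
  · rw [padicValRat.pow]

theorem injective_finsuppProd_pow_of_separating {s : ι → ℚ} (hs : ∀ i, s i ≠ 0)
    (hsep : ∀ i, ∃ p, p.Prime ∧ padicValRat p (s i) ≠ 0 ∧ ∀ j ≠ i, padicValRat p (s j) = 0) :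
    Injective fun a : ι →₀ ℕ => a.prod fun i n => s i ^ n := by
  intro a b hab
  ext i
  obtain ⟨p, hp, hpi, hpj⟩ := hsep i
  have := Fact.mk hp
  have hval := congrArg (padicValRat p) hab
  simp only [padicValRat_finsuppProd_pow_of_separating hs hpj] at hval
  exact_mod_cast mul_right_cancel₀ hpi hval

theorem exists_prime_separating_mul {t₀ : ℚ} {s : ι → ℚ} (hs : ∀ i, t₀ * s i ≠ 0)
    (hν : ∀ i, (nuPrimes (s i)).Nonempty) (h₀ : ∀ i, Disjoint (nuPrimes t₀) (nuPrimes (s i)))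
    (hdisj : Pairwise (Disjoint on fun i => nuPrimes (s i))) (i : ι) :
    ∃ p, p.Prime ∧ padicValRat p (t₀ * s i) ≠ 0 ∧ ∀ j ≠ i, padicValRat p (t₀ * s j) = 0 := by
  obtain ⟨p, hpi⟩ := hν i
  have hp : p.Prime := hpi.1
  have := Fact.mk hp
  have hval : ∀ j, padicValRat p (t₀ * s j) = 0 ↔ p ∉ nuPrimes (s j) := fun j => by
    have ⟨ht₀, hsj⟩ := mul_ne_zero_iff.1 (hs j)
    rw [padicValRat.mul ht₀ hsj,
      (padicValRat_eq_zero_iff_notMem_nuPrimes ht₀ hp).2 (Set.disjoint_right.1 (h₀ i) hpi),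
      zero_add, padicValRat_eq_zero_iff_notMem_nuPrimes hsj hp]
  refine ⟨p, hp, fun h => (hval i).1 h hpi, fun j hji => (hval j).2 ?_⟩
  exact Set.disjoint_left.1 (hdisj hji.symm) hpi

theorem linearIndependent_of_eigenvectors {F : Type*} [Field F] [CharZero F] (δ : F →+* F)
    {v : ι → F} {μ : ι → ℚ} (hμ : Injective μ) (hv : ∀ i, v i ≠ 0)
    (hδ : ∀ i, δ (v i) = μ i * v i) : LinearIndependent ℚ v :=
  Module.End.eigenvectors_linearIndependent' δ.toRatAlgHom.toLinearMap μ hμ v fun i =>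
    ⟨Module.End.mem_eigenspace_iff.2 (by simpa [Rat.smul_def] using hδ i), hv i⟩

theorem map_finsuppProd_pow_of_eigen {M G : Type*} [CommMonoid M] [FunLike G M M]
    [MonoidHomClass G M M] (δ : G) {x c : ι → M}
    (hδ : ∀ i, δ (x i) = c i * x i) (a : ι →₀ ℕ) :
    δ (a.prod fun i n => x i ^ n) = (a.prod fun i n => c i ^ n) * a.prod fun i n => x i ^ n := by
  simp only [map_finsuppProd, map_pow, hδ, mul_pow]
  exact Finsupp.prod_mul

theorem algebraicIndependent_of_linearIndependent_monomials {R A : Type*} [CommRing R]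
    [CommRing A] [Algebra R A] {x : ι → A}
    (h : LinearIndependent R fun a : ι →₀ ℕ => a.prod fun i n => x i ^ n) :
    AlgebraicIndependent R x := by
  have : Injective (aeval x : MvPolynomial ι R →ₐ[R] A).toLinearMap :=
    LinearMap.injective_of_linearIndependent (basisMonomials ι R).span_eq
      (by simpa [Function.comp_def, aeval_monomial] using h)
  exact this

end

theorem vanishing_lemma_general (F : Type*) [Field F] [CharZero F] (k : ℕ)
    (x : Fin (k + 1) → F)
    (hind : AlgebraicIndependent ℚ (fun i : Fin k => x i.castSucc))
    (hdep : ¬ AlgebraicIndependent ℚ x)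
    (δ : F ≃+* F) (t : Fin (k + 2) → ℚ)
    (hδ : ∀ i : Fin (k + 1), δ (x i) = ((t 0 * t i.succ : ℚ) : F) * x i)
    (htν : ∀ i : Fin (k + 1), nuPrimes (t i.succ) ≠ ∅)
    (hdisj : ∀ i j : Fin (k + 2), i ≠ j → nuPrimes (t i) ∩ nuPrimes (t j) = ∅) :
    x (Fin.last k) = 0 := by
  by_contra hlast
  have hx : ∀ i, x i ≠ 0 := Fin.lastCases hlast hind.ne_zero
  have ht : ∀ i : Fin (k + 1), t 0 * t i.succ ≠ 0 := fun i h =>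
    hx i (δ.injective (by simp [hδ i, h]))
  have hsep := exists_prime_separating_mul ht (fun i => Set.nonempty_iff_ne_empty.2 (htν i))
    (fun i => Set.disjoint_iff_inter_eq_empty.2 (hdisj 0 i.succ (Fin.succ_ne_zero i).symm))
    (fun i j hij => Set.disjoint_iff_inter_eq_empty.2 (hdisj _ _ (Fin.succ_injective _ |>.ne hij)))
  have hmonomial (a : Fin (k + 1) →₀ ℕ) : (δ : F →+* F) (a.prod fun i n => x i ^ n) =
      ((a.prod fun i n => (t 0 * t i.succ) ^ n : ℚ) : F) * a.prod fun i n => x i ^ n := by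
    exact_mod_cast map_finsuppProd_pow_of_eigen δ hδ a
  exact hdep <| algebraicIndependent_of_linearIndependent_monomials <|
    linearIndependent_of_eigenvectors _ (injective_finsuppProd_pow_of_separating ht hsep)
      (fun a => Finset.prod_ne_zero_iff.2 fun i _ => pow_ne_zero _ (hx i)) hmonomial

/-- Vanishing lemma: if `x₁,…,x_k` are algebraically independent over `ℚ`, `x₁,…,x_{k+1}` are
algebraically dependent over `ℚ`, and a field automorphism `δ` satisfies
`δ xᵢ = t₀ tᵢ xᵢ` with rationals `t₀,…,t_{k+1}` having pairwise disjoint prime supports,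
`tᵢ ≠ 1` and `ν(tᵢ) ≠ ∅` for `i ≥ 1`, then `x_{k+1} = 0`. -/
theorem vanishing_lemma (F : Type*) [Field F] [CharZero F] (k : ℕ)
    (x : Fin (k + 1) → F)
    (hind : AlgebraicIndependent ℚ (fun i : Fin k => x i.castSucc))
    (hdep : ¬ AlgebraicIndependent ℚ x)
    (δ : F ≃+* F) (t : Fin (k + 2) → ℚ)
    (hδ : ∀ i : Fin (k + 1), δ (x i) = ((t 0 * t i.succ : ℚ) : F) * x i)
    (ht1 : ∀ i : Fin (k + 1), t i.succ ≠ 1)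
    (htν : ∀ i : Fin (k + 1), nuPrimes (t i.succ) ≠ ∅)
    (hdisj : ∀ i j : Fin (k + 2), i ≠ j → nuPrimes (t i) ∩ nuPrimes (t j) = ∅) :
    x (Fin.last k) = 0 :=
  vanishing_lemma_general F k x hind hdep δ t hδ htν hdisj
end

section
/- Let F be a field of characteristic zero and x₁,…,x_{k+1} ∈ F with x₁,…,x_k algebraically independent over ℚ and x₁,…,x_{k+1} algebraically dependent over ℚ. Suppose there exist rational numbers s₁,…,s_{k+1} and a field automorphism δ of F with δ(x_i) = s_i x_i for all i, such that s₁^{i₁}⋯s_{k+1}^{i_{k+1}} ≠ 1 whenever (i₁,…,i_{k+1}) ∈ ℤ^{k+1} is nonzero. Then x_{k+1} = 0. -/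
open MvPolynomial

/-- Strengthened vanishing lemma: if `x₁,…,x_k` are algebraically independent over `ℚ`,
`x₁,…,x_{k+1}` algebraically dependent over `ℚ`, and a field automorphism `δ` satisfies
`δ xᵢ = sᵢ xᵢ` with rationals `sᵢ` such that no nontrivial integer-power product
`∏ sᵢ^{mᵢ}` equals `1`, then `x_{k+1} = 0`. -/
theorem vanishing_lemma_strong (F : Type*) [Field F] [CharZero F] (k : ℕ)
    (x : Fin (k + 1) → F)
    (hind : AlgebraicIndependent ℚ (fun i : Fin k => x i.castSucc))
    (hdep : ¬ AlgebraicIndependent ℚ x)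
    (δ : F ≃+* F) (s : Fin (k + 1) → ℚ)
    (hδ : ∀ i : Fin (k + 1), δ (x i) = ((s i : ℚ) : F) * x i)
    (hs : ∀ m : Fin (k + 1) → ℤ, m ≠ 0 → (∏ i, s i ^ m i) ≠ 1) :
    x (Fin.last k) = 0 := by
  by_contra hxlast
  -- all x i ≠ 0
  have hxne : ∀ i, x i ≠ 0 := by
    intro i
    induction i using Fin.lastCases with
    | last => exact hxlast
    | cast j => exact hind.ne_zero j
  -- all s i ≠ 0
  have hsne : ∀ i, s i ≠ 0 := by
    intro i hsi
    apply hxne i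
    have : δ (x i) = δ 0 := by rw [hδ i, hsi]; simp
    exact δ.injective this
  -- multiplier of a monomial
  set S : (Fin (k + 1) →₀ ℕ) → ℚ := fun α => ∏ i, s i ^ α i with hS
  have hSne : ∀ α, S α ≠ 0 := fun α => Finset.prod_ne_zero_iff.2 fun i _ => pow_ne_zero _ (hsne i)
  have hSinj : ∀ α β, α ≠ β → S α ≠ S β := by
    intro α β hne heq
    have hm : (fun i => (α i : ℤ) - (β i : ℤ)) ≠ 0 := by
      intro h
      apply hne
      ext i
      have := congrFun h i
      simp at this
      exact_mod_cast sub_eq_zero.1 this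
    apply hs _ hm
    have : ∀ i : Fin (k + 1), s i ^ ((α i : ℤ) - (β i : ℤ)) = s i ^ (α i) / s i ^ (β i) := by
      intro i
      rw [zpow_sub₀ (hsne i), zpow_natCast, zpow_natCast]
    rw [Finset.prod_congr rfl (fun i _ => this i), Finset.prod_div_distrib]
    rw [hS] at heq
    simp only at heq
    rw [heq, div_self (hSne β)]
  -- twist operator fact: evaluation of p equals sum formula
  have haeval : ∀ p : MvPolynomial (Fin (k + 1)) ℚ,
      (aeval x) p = ∑ α ∈ p.support, ((p.coeff α : ℚ) : F) * ∏ i, x i ^ α i := by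
    intro p
    rw [aeval_def, eval₂_eq']
    refine Finset.sum_congr rfl fun α _ => ?_
    rw [eq_ratCast (algebraMap ℚ F)]
  have hprod_ne : ∀ α : Fin (k + 1) →₀ ℕ, (∏ i, x i ^ α i) ≠ 0 :=
    fun α => Finset.prod_ne_zero_iff.2 fun i _ => pow_ne_zero _ (hxne i)
  -- main claim
  have main : ∀ n : ℕ, ∀ p : MvPolynomial (Fin (k + 1)) ℚ,
      p.support.card ≤ n → (aeval x) p = 0 → p = 0 := by
    intro n
    induction n with
    | zero =>
      intro p hcard _
      have : p.support = ∅ := Finset.card_eq_zero.1 (Nat.le_zero.1 hcard)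
      exact support_eq_empty.1 this
    | succ n ih =>
      intro p hcard hev
      by_contra hp
      obtain ⟨α₀, hα₀⟩ := support_nonempty.2 hp
      -- the twisted polynomial
      set T : MvPolynomial (Fin (k + 1)) ℚ :=
        ∑ α ∈ p.support, monomial α (S α * p.coeff α) with hT
      have hTev : (aeval x) T = 0 := by
        have h1 : (aeval x) T = ∑ α ∈ p.support, ((S α * p.coeff α : ℚ) : F) * ∏ i, x i ^ α i := by
          rw [hT, map_sum]
          refine Finset.sum_congr rfl fun α _ => ?_
          rw [aeval_monomial, eq_ratCast (algebraMap ℚ F),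
            Finsupp.prod_fintype _ _ (fun i => pow_zero _)]
        have h2 : δ ((aeval x) p) = ∑ α ∈ p.support, ((S α * p.coeff α : ℚ) : F) * ∏ i, x i ^ α i := by
          rw [haeval, map_sum]
          refine Finset.sum_congr rfl fun α _ => ?_
          rw [map_mul, map_prod]
          have hx : ∀ i : Fin (k + 1), δ (x i ^ α i) = ((s i : F) ^ α i) * x i ^ α i := by
            intro i; rw [map_pow, hδ, mul_pow]
          rw [Finset.prod_congr rfl (fun i _ => hx i), Finset.prod_mul_distrib]
          have : δ ((p.coeff α : ℚ) : F) = ((p.coeff α : ℚ) : F) := map_ratCast δ.toRingHom _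
          rw [this]
          simp only [hS]
          push_cast
          ring
        rw [h1, ← h2, hev, map_zero]
      -- the difference polynomial
      set q : MvPolynomial (Fin (k + 1)) ℚ := C (S α₀) * p - T with hq
      have hqcoeff : ∀ β, q.coeff β = (S α₀ - S β) * p.coeff β := by
        intro β
        rw [hq, coeff_sub, coeff_C_mul, hT]
        rw [coeff_sum]
        simp only [coeff_monomial]
        rw [Finset.sum_ite_eq' p.support β (fun α => S α * p.coeff α)]
        by_cases hβ : β ∈ p.support
        · rw [if_pos hβ]; ring
        · rw [if_neg hβ, notMem_support_iff.1 hβ]; ring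
      have hqα₀ : q.coeff α₀ = 0 := by rw [hqcoeff]; ring
      have hqsupp : q.support ⊆ p.support.erase α₀ := by
        intro β hβ
        rw [mem_support_iff] at hβ
        rw [Finset.mem_erase, mem_support_iff]
        refine ⟨fun h => hβ (h ▸ hqα₀), fun h => hβ (by rw [hqcoeff, h, mul_zero])⟩
      have hqev : (aeval x) q = 0 := by
        rw [hq, map_sub, map_mul, hev, hTev, mul_zero, sub_zero]
      have hqcard : q.support.card ≤ n := by
        calc q.support.card ≤ (p.support.erase α₀).card := Finset.card_le_card hqsupp
          _ = p.support.card - 1 := Finset.card_erase_of_mem hα₀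
          _ ≤ n := by omega
      have hq0 : q = 0 := ih q hqcard hqev
      -- so support p = {α₀}
      have hsingle : ∀ β ∈ p.support, β = α₀ := by
        intro β hβ
        by_contra hβne
        have : q.coeff β = 0 := by rw [hq0]; simp
        rw [hqcoeff] at this
        rcases mul_eq_zero.1 this with h | h
        · exact hSinj α₀ β (Ne.symm hβne) (sub_eq_zero.1 h)
        · exact mem_support_iff.1 hβ h
      have hsupp : p.support = {α₀} :=
        Finset.eq_singleton_iff_unique_mem.2 ⟨hα₀, hsingle⟩
      rw [haeval, hsupp, Finset.sum_singleton] at hev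
      rcases mul_eq_zero.1 hev with h | h
      · exact mem_support_iff.1 hα₀ (by exact_mod_cast h)
      · exact hprod_ne α₀ h
  -- conclude
  apply hdep
  rw [algebraicIndependent_iff_injective_aeval]
  intro a b hab
  have : (aeval x) (a - b) = 0 := by rw [map_sub, hab, sub_self]
  have := main (a - b).support.card (a - b) le_rfl this
  exact sub_eq_zero.1 this
end

section
/- Let A be an l×l integer matrix whose Smith normal form is diag(d₁,…,d_l), and let M be an abelian group (written multiplicatively) such that the map x ↦ x^{d_i} is surjective on M for each i. Then for every a ∈ M^l the system ∏_j T_j^{A_{ji}} = a_i (i = 1,…,l) has a solution T ∈ M^l. -/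
/-!
Let `A` act on `M^l` by `(A • T)ᵢ = ∏ⱼ Tⱼ ^ Aⱼᵢ`; this is a right action of the ring of integer
matrices (`(B * C) • T = C • (B • T)`). From `U * A * V = diagonal d` the action of the diagonal
matrix factors as `V ∘ A ∘ U`. The diagonal action is surjective because every `dᵢ`-th power map
is, and the action of `V` is injective because `V` is invertible, so the action of `A` is
surjective.
-/

open Function

lemma zpow_finset_sum {M ι : Type*} [CommGroup M] (x : M) (s : Finset ι) (f : ι → ℤ) :
    x ^ (∑ j ∈ s, f j) = ∏ j ∈ s, x ^ f j := by
  induction s using Finset.cons_induction with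
  | empty => simp
  | cons a s ha ih => rw [Finset.sum_cons, Finset.prod_cons, zpow_add, ih]

namespace Matrix

variable {M ι : Type*} [CommGroup M] [Fintype ι]

def zpowAct (B : Matrix ι ι ℤ) (T : ι → M) : ι → M := fun i => ∏ j, T j ^ B j i

lemma zpowAct_mul (B C : Matrix ι ι ℤ) (T : ι → M) :
    zpowAct (B * C) T = zpowAct C (zpowAct B T) := by
  funext i
  simp only [zpowAct, mul_apply, zpow_finset_sum, _root_.zpow_mul, ← Finset.prod_zpow]
  exact Finset.prod_comm

variable [DecidableEq ι]

lemma zpowAct_one (T : ι → M) : zpowAct (1 : Matrix ι ι ℤ) T = T := by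
  funext i
  simp [zpowAct, one_apply, apply_ite]

lemma zpowAct_diagonal (d : ι → ℤ) (T : ι → M) (i : ι) :
    zpowAct (diagonal d) T i = T i ^ d i := by
  rw [zpowAct, Finset.prod_eq_single i (fun j _ hj => by simp [diagonal_apply_ne _ hj])
    (by simp)]
  simp

lemma zpowAct_diagonal_surjective {d : ι → ℤ} (hd : ∀ i, Surjective fun x : M => x ^ d i) :
    Surjective (zpowAct (M := M) (diagonal d)) := by
  intro a
  choose s hs using fun i => hd i (a i)
  exact ⟨s, funext fun i => (zpowAct_diagonal d s i).trans (hs i)⟩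

lemma zpowAct_injective_of_isUnit_det {V : Matrix ι ι ℤ} (hV : IsUnit V.det) :
    Injective (zpowAct (M := M) V) :=
  LeftInverse.injective (g := zpowAct V⁻¹) fun T => by
    rw [← zpowAct_mul, mul_nonsing_inv V hV, zpowAct_one]

lemma zpowAct_surjective_of_mul_mul_eq_diagonal {A U V : Matrix ι ι ℤ} {d : ι → ℤ}
    (hV : IsUnit V.det) (hSNF : U * A * V = diagonal d)
    (hd : ∀ i, Surjective fun x : M => x ^ d i) :
    Surjective (zpowAct (M := M) A) := by
  have hfactor : zpowAct (M := M) (diagonal d) = (zpowAct V ∘ zpowAct A) ∘ zpowAct U := by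
    funext T
    rw [← hSNF, zpowAct_mul, zpowAct_mul]
    rfl
  have hdiag := zpowAct_diagonal_surjective (M := M) hd
  rw [hfactor] at hdiag
  exact hdiag.of_comp.of_comp_left (zpowAct_injective_of_isUnit_det hV)

end Matrix

theorem snf_system_solvable_general (M : Type*) [CommGroup M] (l : ℕ)
    (A : Matrix (Fin l) (Fin l) ℤ) (d : Fin l → ℤ)
    (U V : Matrix (Fin l) (Fin l) ℤ) (hV : IsUnit V.det)
    (hSNF : U * A * V = Matrix.diagonal d)
    (hsurj : ∀ i : Fin l, ∀ a : M, ∃ b : M, b ^ d i = a)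
    (a : Fin l → M) :
    ∃ T : Fin l → M, ∀ i : Fin l, (∏ j : Fin l, T j ^ A j i) = a i := by
  obtain ⟨T, hT⟩ := Matrix.zpowAct_surjective_of_mul_mul_eq_diagonal hV hSNF hsurj a
  exact ⟨T, fun i => congrFun hT i⟩

/-- If the Smith normal form of an `l×l` integer matrix `A` is `diag(d₁,…,d_l)` and the
`dᵢ`-th power maps are surjective on an abelian group `M`, then for every `a ∈ M^l` the
system `∏_j T_j^{A_{ji}} = a_i` has a solution `T ∈ M^l`. -/
theorem snf_system_solvable (M : Type*) [CommGroup M] (l : ℕ)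
    (A : Matrix (Fin l) (Fin l) ℤ) (d : Fin l → ℤ)
    (U V : Matrix (Fin l) (Fin l) ℤ) (hU : IsUnit U.det) (hV : IsUnit V.det)
    (hSNF : U * A * V = Matrix.diagonal d)
    (hsurj : ∀ i : Fin l, ∀ a : M, ∃ b : M, b ^ d i = a)
    (a : Fin l → M) :
    ∃ T : Fin l → M, ∀ i : Fin l, (∏ j : Fin l, T j ^ A j i) = a i :=
  snf_system_solvable_general M l A d U V hV hSNF hsurj a
end

section
/- Let G be a group with G/Z(G) simple, and let φ be an automorphism of G such that the induced automorphism φ̄ on G/Z(G) has infinitely many twisted conjugacy classes. If the φ-conjugacy class [e]_φ is a subgroup of G, then φ is a central automorphism (i.e., φ acts as the identity on G/Z(G)). -/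
/-- Let `G/Z(G)` be simple and `φ` an automorphism of `G` whose induced automorphism `ψ` on
`G/Z(G)` has infinitely many twisted conjugacy classes. If `[e]_φ` is a subgroup of `G`,
then `φ` is a central automorphism. -/
theorem central_of_class_of_one_subgroup (G : Type*) [Group G]
    [IsSimpleGroup (G ⧸ Subgroup.center G)] (φ : G ≃* G)
    (ψ : (G ⧸ Subgroup.center G) ≃* (G ⧸ Subgroup.center G))
    (hψ : ∀ g : G, ψ (g : G ⧸ Subgroup.center G) = ((φ g : G) : G ⧸ Subgroup.center G))
    (hR : Infinite (Quot (fun a b : G ⧸ Subgroup.center G => ∃ z, a = z * b * ψ z⁻¹)))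
    (H : Subgroup G) (hH : (H : Set G) = {w : G | ∃ z : G, w = z * φ z⁻¹}) :
    ∀ g : G, φ g * g⁻¹ ∈ Subgroup.center G := by
  set Z := Subgroup.center G with hZ
  set π := QuotientGroup.mk' Z with hπ
  set K := H.map π with hK
  have hψ' : ∀ g : G, ψ (π g) = π (φ g) := fun g => hψ g
  have hKset : (K : Set (G ⧸ Z)) = {w | ∃ z : G ⧸ Z, w = z * ψ z⁻¹} := by
    ext w
    simp only [hK, Subgroup.coe_map, Set.mem_image, Set.mem_setOf_eq]
    constructor
    · rintro ⟨h, hh, rfl⟩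
      have : h ∈ (H : Set G) := hh
      rw [hH] at this
      obtain ⟨z, rfl⟩ := this
      refine ⟨π z, ?_⟩
      rw [map_mul, map_inv φ, map_inv π, map_inv ψ, hψ']
    · rintro ⟨z, rfl⟩
      obtain ⟨x, rfl⟩ := QuotientGroup.mk'_surjective Z z
      refine ⟨x * φ x⁻¹, ?_, ?_⟩
      · show x * φ x⁻¹ ∈ (H : Set G)
        rw [hH]; exact ⟨x, rfl⟩
      · show π (x * φ x⁻¹) = π x * ψ (π x)⁻¹
        rw [map_mul, map_inv φ, map_inv π, map_inv ψ, hψ']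
  have hmemK : ∀ w : G ⧸ Z, w ∈ K ↔ ∃ z : G ⧸ Z, w = z * ψ z⁻¹ := by
    intro w
    rw [← SetLike.mem_coe, hKset]; rfl
  have hnorm : K.Normal := by
    constructor
    intro n hn g
    obtain ⟨z, rfl⟩ := (hmemK n).1 hn
    have h1 : g * (z * ψ z⁻¹) * ψ g⁻¹ ∈ K := by
      rw [hmemK]
      exact ⟨g * z, by simp [mul_assoc]⟩
    have h2 : g * ψ g⁻¹ ∈ K := (hmemK _).2 ⟨g, rfl⟩
    have key : g * (z * ψ z⁻¹) * g⁻¹ = (g * (z * ψ z⁻¹) * ψ g⁻¹) * (g * ψ g⁻¹)⁻¹ := by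
      group
    rw [key]
    exact K.mul_mem h1 (K.inv_mem h2)
  rcases hnorm.eq_bot_or_eq_top with hbot | htop
  · -- K = ⊥ : H ≤ Z, so φ g * g⁻¹ ∈ Z
    intro g
    have hg : φ g * g⁻¹ ∈ H := by
      have h1 : g * φ g⁻¹ ∈ H := by
        rw [← SetLike.mem_coe, hH]; exact ⟨g, rfl⟩
      have := H.inv_mem h1
      simpa [map_inv] using this
    have : π (φ g * g⁻¹) = 1 := by
      have : π (φ g * g⁻¹) ∈ K := ⟨φ g * g⁻¹, hg, rfl⟩
      rw [hbot] at this
      simpa using this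
    rwa [← QuotientGroup.eq_one_iff]
  · -- K = ⊤ : one twisted class, contradicting infiniteness
    exfalso
    have hsub : Subsingleton (Quot (fun a b : G ⧸ Z => ∃ z, a = z * b * ψ z⁻¹)) := by
      constructor
      have hone : ∀ a : G ⧸ Z, Quot.mk _ a =
          Quot.mk (fun a b : G ⧸ Z => ∃ z, a = z * b * ψ z⁻¹) 1 := by
        intro a
        have : a ∈ K := htop ▸ Subgroup.mem_top a
        obtain ⟨z, rfl⟩ := (hmemK a).1 this
        exact Quot.sound ⟨z, by group⟩
      intro x y
      induction x using Quot.ind with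
      | _ a =>
        induction y using Quot.ind with
        | _ b => rw [hone a, hone b]
    exact not_subsingleton _ hsub
end
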